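/- Let α > 0 and let Z be a random vector with values in [0,∞)^d. Define the measure Λ on [0,∞)^d \ {0} by Λ(A) = ∫_0^∞ P(uZ ∈ A) α u^{-α-1} du. Then for every x ∈ [0,∞)^d \ {0}, Λ([0,x]^c) = E[ max_{1≤i≤d} (Z_i/x_i)^α ], where [0,x]^c = [0,∞)^d \ ([0,x_1]×···×[0,x_d]). -/

import Mathlib

/-!
By Tonelli, the left side is `∫ ω, ∫_{u > 0, uZ(ω) ∉ [0,x]} α u^(-α-1) du dμ`. For fixed `ω` the
`u > 0` with `x_i < u Z_i` for some `i` form the half-line `u > 1 / M`, where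
`M = max_i Z_i / x_i ∈ [0, ∞]` (computed in `ℝ≥0∞`), and `∫_{u > t} α u^(-α-1) du = t^(-α)`
for every `t ∈ [0, ∞]`, which gives `M^α`.
-/

open MeasureTheory Set ENNReal

section TailDensity

variable {α : ℝ}

lemma lintegral_Ioi_ofReal_mul_rpow (hα : 0 < α) {t : ℝ} (ht : 0 < t) :
    ∫⁻ u in Ioi t, ENNReal.ofReal (α * u ^ (-α - 1)) = ENNReal.ofReal (t ^ (-α)) := by
  have hint : IntegrableOn (fun u : ℝ => α * u ^ (-α - 1)) (Ioi t) :=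
    (integrableOn_Ioi_rpow_of_lt (by linarith) ht).const_mul α
  have hnonneg : 0 ≤ᵐ[volume.restrict (Ioi t)] fun u : ℝ => α * u ^ (-α - 1) := by
    filter_upwards [ae_restrict_mem measurableSet_Ioi] with u hu
    have : 0 < u := ht.trans hu
    positivity
  rw [← ofReal_integral_eq_lintegral_ofReal hint hnonneg, integral_const_mul,
    integral_Ioi_rpow_of_lt (by linarith) ht, sub_add_cancel]
  congr 1
  field_simp

lemma lintegral_Ioi_zero_ofReal_mul_rpow (hα : 0 < α) :
    ∫⁻ u in Ioi (0 : ℝ), ENNReal.ofReal (α * u ^ (-α - 1)) = ∞ := by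
  by_contra hfin
  have hnonneg : 0 ≤ᵐ[volume.restrict (Ioi (0 : ℝ))] fun u : ℝ => α * u ^ (-α - 1) := by
    filter_upwards [ae_restrict_mem measurableSet_Ioi] with u (hu : 0 < u)
    positivity
  have hint : IntegrableOn (fun u : ℝ => α * u ^ (-α - 1)) (Ioi 0) :=
    ⟨by fun_prop, (hasFiniteIntegral_iff_ofReal hnonneg).2 (lt_top_iff_ne_top.2 hfin)⟩
  have hrpow := hint.const_mul α⁻¹
  simp only [← mul_assoc, inv_mul_cancel₀ hα.ne', one_mul] at hrpow
  exact not_integrableOn_Ioi_rpow (-α - 1) hrpow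

lemma lintegral_ofReal_mul_rpow_of_lt_ofReal (hα : 0 < α) (t : ℝ≥0∞) :
    ∫⁻ u in {u : ℝ | t < ENNReal.ofReal u}, ENNReal.ofReal (α * u ^ (-α - 1)) = t ^ (-α) := by
  induction t with
  | top => simp [hα]
  | coe r =>
    have hset : {u : ℝ | (r : ℝ≥0∞) < ENNReal.ofReal u} = Ioi (r : ℝ) := by
      ext u; simp [ENNReal.coe_lt_ofReal]
    rw [hset]
    rcases eq_zero_or_pos r with rfl | hr
    · simp [lintegral_Ioi_zero_ofReal_mul_rpow hα, ENNReal.zero_rpow_of_neg (neg_neg_of_pos hα)]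
    · rw [lintegral_Ioi_ofReal_mul_rpow hα (NNReal.coe_pos.2 hr),
        ← ENNReal.ofReal_coe_nnreal, ENNReal.ofReal_rpow_of_pos (NNReal.coe_pos.2 hr)]

end TailDensity

-- In `ℝ≥0∞`, `z / 0 = ∞` for `z > 0` but `0 / 0 = 0`: exactly what makes this hold when `x = 0`.
lemma lt_mul_and_pos_iff_inv_div_lt_ofReal {x z u : ℝ} (hx : 0 ≤ x) :
    (x < u * z ∧ 0 < u) ↔ (ENNReal.ofReal z / ENNReal.ofReal x)⁻¹ < ENNReal.ofReal u := by
  rcases le_or_gt u 0 with hu | hu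
  · simp [hu.not_gt, ENNReal.ofReal_of_nonpos hu]
  simp only [hu, and_true]
  rcases le_or_gt z 0 with hz | hz
  · have : u * z ≤ x := (mul_nonpos_of_nonneg_of_nonpos hu.le hz).trans hx
    simp [this.not_gt, ENNReal.ofReal_of_nonpos hz]
  rcases hx.eq_or_lt with rfl | hx
  · simp [mul_pos hu hz, ENNReal.div_zero (ENNReal.ofReal_pos.2 hz).ne', hu]
  · rw [← ENNReal.ofReal_div_of_pos hx, ← ENNReal.ofReal_inv_of_pos (div_pos hz hx), inv_div,
      ENNReal.ofReal_lt_ofReal_iff hu, div_lt_iff₀ hz, mul_comm]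

lemma setOf_exists_lt_mul_inter_Ioi {ι : Type*} {x z : ι → ℝ} (hx : ∀ i, 0 ≤ x i) :
    {u : ℝ | ∃ i, x i < u * z i} ∩ Ioi 0 =
      {u | (⨆ i, ENNReal.ofReal (z i) / ENNReal.ofReal (x i))⁻¹ < ENNReal.ofReal u} := by
  ext u
  simp only [mem_inter_iff, mem_ofPred_eq, mem_Ioi, ENNReal.inv_iSup, iInf_lt_iff,
    ← lt_mul_and_pos_iff_inv_div_lt_ofReal (hx _), exists_and_right]

lemma lintegral_setOf_exists_lt_mul {ι : Type*} {α : ℝ} (hα : 0 < α) {x : ι → ℝ}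
    (hx : ∀ i, 0 ≤ x i) (z : ι → ℝ) :
    ∫⁻ u in {u : ℝ | ∃ i, x i < u * z i} ∩ Ioi 0, ENNReal.ofReal (α * u ^ (-α - 1)) =
      ⨆ i, (ENNReal.ofReal (z i) / ENNReal.ofReal (x i)) ^ α := by
  rw [setOf_exists_lt_mul_inter_Ioi hx, lintegral_ofReal_mul_rpow_of_lt_ofReal hα,
    ENNReal.inv_rpow, ENNReal.rpow_neg, inv_inv]
  exact (ENNReal.orderIsoRpow α hα).map_iSup _

theorem Lambda_tail_function
    {Ω : Type*} [MeasurableSpace Ω] (μ : Measure Ω) [IsProbabilityMeasure μ]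
    {d : ℕ} (Z : Ω → Fin d → ℝ) (hZ : Measurable Z)
    (α : ℝ) (hα : 0 < α)
    (x : Fin d → ℝ) (hx : ∀ i, 0 ≤ x i) :
    ∫⁻ u in Set.Ioi (0 : ℝ),
        μ {ω | ∃ i, x i < u * Z ω i} * ENNReal.ofReal (α * u ^ (-α - 1)) =
      ∫⁻ ω, ⨆ i, (ENNReal.ofReal (Z ω i) / ENNReal.ofReal (x i)) ^ α ∂μ := by
  set ν := (volume.restrict (Ioi (0 : ℝ))).withDensity fun u => ENNReal.ofReal (α * u ^ (-α - 1))
  set S := {p : ℝ × Ω | ∃ i, x i < p.1 * Z p.2 i}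
  have hS : MeasurableSet S := by
    simp only [S, ofPred_exists]
    exact .iUnion fun i => measurableSet_lt measurable_const (by fun_prop)
  calc _ = ∫⁻ u, μ (Prod.mk u ⁻¹' S) ∂ν := by
        rw [lintegral_withDensity_eq_lintegral_mul _ (by fun_prop)
          (measurable_measure_prodMk_left hS)]
        simp only [Pi.mul_apply, mul_comm]; rfl
    _ = ν.prod μ S := (Measure.prod_apply hS).symm
    _ = ∫⁻ ω, ν ((·, ω) ⁻¹' S) ∂μ := Measure.prod_apply_symm hS
    _ = _ := lintegral_congr fun ω => by
        rw [withDensity_apply _ (measurable_prodMk_right hS),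
          Measure.restrict_restrict (measurable_prodMk_right hS)]
        exact lintegral_setOf_exists_lt_mul hα hx (Z ω)
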